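/- Localization estimate (Proposition 2): for every u ∈ ℓ²(V,μ) with Δ_θ u ∈ ℓ²(V,μ) and every 0 < ε < 1, ‖χ_n Δ_θ u‖² ≤ (1−ε)^{-1}‖Δ_θ(χ_n u)‖² + ((9+4ε)/((1−ε)ε)) β_n² ‖u‖². -/

import Mathlib

open scoped BigOperators

/-- The formal magnetic Laplacian on a weighted graph. -/
noncomputable def magLap {V : Type*} (μ : V → ℝ) (b : V → V → ℝ) (θ : V → V → ℝ)
    (u : V → ℂ) (x : V) : ℂ :=
  (μ x : ℂ)⁻¹ * ∑' y, (b x y : ℂ) * (u x - Complex.exp (Complex.I * (θ x y : ℝ)) * u y)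

/-- The term `P_ψ[u]`. -/
noncomputable def magP {V : Type*} (μ : V → ℝ) (b : V → V → ℝ) (θ : V → V → ℝ)
    (ψ u : V → ℂ) (x : V) : ℂ :=
  (μ x : ℂ)⁻¹ *
    ∑' y, (b x y : ℂ) * (ψ x - ψ y) * (u x - Complex.exp (Complex.I * (θ x y : ℝ)) * u y)

/-- The cut-off function `χ_n`. -/
noncomputable def cutoff {V : Type*} (dist : V → ℕ) (n : ℕ) (x : V) : ℝ :=
  min (max ((2 * (n : ℝ) - (dist x : ℝ)) / (n : ℝ)) 0) 1

/-- Squared norm in `ℓ²(V, μ)`. -/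
noncomputable def wnormSq {V : Type*} (μ : V → ℝ) (f : V → ℂ) : ℝ :=
  ∑' x, μ x * ‖f x‖ ^ 2

/-- Inner product in `ℓ²(V, μ)`. -/
noncomputable def wInner {V : Type*} (μ : V → ℝ) (f g : V → ℂ) : ℂ :=
  ∑' x, (μ x : ℂ) * f x * (starRingEnd ℂ) (g x)

/-!
Writing `Δ_θ(χu) = χ Δ_θ u + K u`, the commutator `K` is the kernel operator
`(K u)(x) = μ(x)⁻¹ ∑_y b(x,y) (χ(x) - χ(y)) e^{iθ(x,y)} u(y)`; in the paper's notation
`K u = u Δχ - P_χ[u]`. Its kernel is dominated by the symmetric kernel `b(x,y) |χ(x) - χ(y)|`,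
whose row sums are at most `d_{2n} p_{2n} / n`: `χ_n` is `1/n`-Lipschitz for the graph distance and
vanishes outside `B(x₀, 2n)`. Cauchy–Schwarz on each row followed by Schur's test gives
`‖K u‖ ≤ β_n ‖u‖` directly, and Young's inequality
`‖a‖² ≤ (1 - ε)⁻¹ ‖a + b‖² + ε⁻¹ ‖b‖²` concludes, since `ε⁻¹ ≤ (9 + 4ε) / ((1 - ε) ε)`.
-/

open scoped ENNReal

lemma ENNReal.ofReal_sum_eq_tsum_of_notMem {α : Type*} {s : Finset α} {f : α → ℝ}
    (hf : ∀ a, 0 ≤ f a) (hs : ∀ a ∉ s, f a = 0) :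
    ENNReal.ofReal (∑ a ∈ s, f a) = ∑' a, ENNReal.ofReal (f a) := by
  rw [ENNReal.ofReal_sum_of_nonneg fun a _ => hf a]
  exact (tsum_eq_sum fun a ha => by rw [hs a ha, ENNReal.ofReal_zero]).symm

lemma ENNReal.tsum_tsum_mul_le_of_symm {α : Type*} {w : α → α → ℝ≥0∞}
    (hw : ∀ x y, w x y = w y x) {C : ℝ≥0∞} (hrow : ∀ x, ∑' y, w x y ≤ C) (a : α → ℝ≥0∞) :
    ∑' x, ∑' y, w x y * a y ≤ C * ∑' y, a y :=
  calc ∑' x, ∑' y, w x y * a y = ∑' y, (∑' x, w y x) * a y := by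
        rw [ENNReal.tsum_comm]
        exact tsum_congr fun y => by rw [ENNReal.tsum_mul_right, tsum_congr fun x => hw x y]
    _ ≤ ∑' y, C * a y := ENNReal.tsum_le_tsum fun y => mul_le_mul_left (hrow y) _
    _ = C * ∑' y, a y := ENNReal.tsum_mul_left

lemma summable_and_tsum_le_of_tsum_ofReal_le {α : Type*} {f : α → ℝ} (hf : ∀ a, 0 ≤ f a)
    {R : ℝ} (hR : 0 ≤ R) (h : ∑' a, ENNReal.ofReal (f a) ≤ ENNReal.ofReal R) :
    Summable f ∧ ∑' a, f a ≤ R := by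
  have hs : Summable f :=
    (ENNReal.summable_toReal (ne_top_of_le_ne_top ENNReal.ofReal_ne_top h)).congr
      fun a => ENNReal.toReal_ofReal (hf a)
  exact ⟨hs, (ENNReal.ofReal_le_ofReal_iff hR).1 ((ENNReal.ofReal_tsum_of_nonneg hf hs).trans_le h)⟩

lemma add_sq_le_inv_one_sub_mul_add_inv_mul {ε : ℝ} (hε0 : 0 < ε) (hε1 : ε < 1) (s t : ℝ) :
    (s + t) ^ 2 ≤ (1 - ε)⁻¹ * s ^ 2 + ε⁻¹ * t ^ 2 := by
  have hε1' : 0 < 1 - ε := sub_pos.2 hε1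
  have key : (1 - ε)⁻¹ * s ^ 2 + ε⁻¹ * t ^ 2 - (s + t) ^ 2
      = (ε * s - (1 - ε) * t) ^ 2 / ((1 - ε) * ε) := by
    field_simp
    ring
  linarith [key, div_nonneg (sq_nonneg (ε * s - (1 - ε) * t)) (mul_pos hε1' hε0).le]

section WeightedNorm

variable {V : Type*} {μ : V → ℝ}

lemma wnormSq_nonneg (hμ : ∀ x, 0 ≤ μ x) (f : V → ℂ) : 0 ≤ wnormSq μ f :=
  tsum_nonneg fun x => mul_nonneg (hμ x) (sq_nonneg _)

lemma wnormSq_le_of_add (hμ : ∀ x, 0 ≤ μ x) {ε : ℝ} (hε0 : 0 < ε) (hε1 : ε < 1) {f g : V → ℂ}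
    (hf : Summable fun x => μ x * ‖f x‖ ^ 2) (hg : Summable fun x => μ x * ‖g x‖ ^ 2) :
    wnormSq μ f ≤ (1 - ε)⁻¹ * wnormSq μ (f + g) + ε⁻¹ * wnormSq μ g := by
  have hfg : Summable fun x => μ x * ‖(f + g) x‖ ^ 2 := by
    refine .of_nonneg_of_le (fun x => mul_nonneg (hμ x) (sq_nonneg _)) (fun x => ?_)
      ((hf.add hg).mul_left 2)
    calc μ x * ‖(f + g) x‖ ^ 2 ≤ μ x * (2 * (‖f x‖ ^ 2 + ‖g x‖ ^ 2)) :=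
          mul_le_mul_of_nonneg_left
            ((pow_le_pow_left₀ (norm_nonneg _) (norm_add_le _ _) 2).trans add_sq_le) (hμ x)
      _ = 2 * (μ x * ‖f x‖ ^ 2 + μ x * ‖g x‖ ^ 2) := by ring
  have hpt : ∀ x, μ x * ‖f x‖ ^ 2
      ≤ (1 - ε)⁻¹ * (μ x * ‖(f + g) x‖ ^ 2) + ε⁻¹ * (μ x * ‖g x‖ ^ 2) := fun x => by
    have htri : ‖f x‖ ≤ ‖(f + g) x‖ + ‖g x‖ := by
      simpa using norm_sub_le ((f + g) x) (g x)
    calc μ x * ‖f x‖ ^ 2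
        ≤ μ x * ((1 - ε)⁻¹ * ‖(f + g) x‖ ^ 2 + ε⁻¹ * ‖g x‖ ^ 2) :=
          mul_le_mul_of_nonneg_left ((pow_le_pow_left₀ (norm_nonneg _) htri 2).trans
            (add_sq_le_inv_one_sub_mul_add_inv_mul hε0 hε1 _ _)) (hμ x)
      _ = _ := by ring
  unfold wnormSq
  rw [← tsum_mul_left, ← tsum_mul_left, ← (hfg.mul_left _).tsum_add (hg.mul_left _)]
  exact hf.tsum_le_tsum hpt ((hfg.mul_left _).add (hg.mul_left _))

lemma summable_mul_norm_mul_sq_of_norm_le_one (hμ : ∀ x, 0 ≤ μ x) {c f : V → ℂ}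
    (hc : ∀ x, ‖c x‖ ≤ 1) (hf : Summable fun x => μ x * ‖f x‖ ^ 2) :
    Summable fun x => μ x * ‖c x * f x‖ ^ 2 :=
  hf.of_nonneg_of_le (fun x => mul_nonneg (hμ x) (sq_nonneg _)) fun x =>
    mul_le_mul_of_nonneg_left (pow_le_pow_left₀ (norm_nonneg _)
      ((norm_mul_le_of_le (hc x) le_rfl).trans_eq (one_mul _)) 2) (hμ x)

end WeightedNorm

section Cutoff

variable {V : Type*} {d : V → ℕ} {n : ℕ}

lemma norm_cutoff_le_one (x : V) : ‖(cutoff d n x : ℂ)‖ ≤ 1 := by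
  rw [Complex.norm_real, cutoff, Real.norm_of_nonneg (le_min (le_max_right _ _) zero_le_one)]
  exact min_le_right _ _

lemma cutoff_eq_zero {x : V} (h : 2 * n ≤ d x) : cutoff d n x = 0 := by
  have h' : (2 * n : ℝ) ≤ d x := by exact_mod_cast h
  have : (2 * (n : ℝ) - d x) / n ≤ 0 :=
    div_nonpos_of_nonpos_of_nonneg (by linarith) n.cast_nonneg
  rw [cutoff, max_eq_right this, min_eq_left zero_le_one]

lemma abs_cutoff_sub_cutoff_le (x y : V) :
    |cutoff d n x - cutoff d n y| ≤ |(d x : ℝ) - d y| / n :=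
  calc |cutoff d n x - cutoff d n y|
      ≤ |max ((2 * (n : ℝ) - d x) / n) 0 - max ((2 * (n : ℝ) - d y) / n) 0| :=
        (abs_min_sub_min_le_max _ _ _ _).trans (max_le le_rfl (by simp))
    _ ≤ |(2 * (n : ℝ) - d x) / n - (2 * (n : ℝ) - d y) / n| := abs_max_sub_max_le_abs _ _ _
    _ = |(d x : ℝ) - d y| / n := by
        rw [div_sub_div_same, abs_div, Nat.abs_cast, abs_sub_comm]
        ring_nf

end Cutoff

lemma SimpleGraph.Adj.dist_le_dist_add_one {V : Type*} {G : SimpleGraph V} {u v w : V}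
    (h : G.Adj v w) : G.dist u w ≤ G.dist u v + 1 := by
  rcases h.diff_dist_adj (u := u) with h | h | h <;> omega

section GraphCutoff

variable {V : Type*} {G : SimpleGraph V} {x₀ x y : V} {n : ℕ}

lemma abs_cutoff_dist_sub_le_of_adj (h : G.Adj x y) :
    |cutoff (G.dist x₀ ·) n x - cutoff (G.dist x₀ ·) n y| ≤ 1 / n := by
  refine (abs_cutoff_sub_cutoff_le x y).trans (div_le_div_of_nonneg_right ?_ n.cast_nonneg)
  have hxy : (G.dist x₀ y : ℝ) ≤ G.dist x₀ x + 1 := by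
    exact_mod_cast h.dist_le_dist_add_one
  have hyx : (G.dist x₀ x : ℝ) ≤ G.dist x₀ y + 1 := by
    exact_mod_cast h.symm.dist_le_dist_add_one
  exact abs_sub_le_iff.2 ⟨by linarith, by linarith⟩

lemma cutoff_dist_eq_of_adj_of_lt (hx : 2 * n < G.dist x₀ x) (h : G.Adj x y) :
    cutoff (G.dist x₀ ·) n x = cutoff (G.dist x₀ ·) n y := by
  have hy := h.symm.dist_le_dist_add_one (u := x₀)
  rw [cutoff_eq_zero hx.le, cutoff_eq_zero (by omega)]

lemma sum_mul_norm_cutoff_dist_sub_le {b : V → V → ℝ} {D P : ℕ → ℝ} (hbnn : ∀ x y, 0 ≤ b x y)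
    (hloc : ∀ x, {y | 0 < b x y}.Finite) (hG : ∀ x y, G.Adj x y ↔ 0 < b x y)
    (hD : ∀ (m : ℕ) (x : V), G.dist x₀ x ≤ m → ({y | 0 < b x y}.ncard : ℝ) ≤ D m)
    (hP : ∀ (m : ℕ) (x y : V), G.dist x₀ x ≤ m → b x y ≤ P m) (x : V) :
    ∑ y ∈ (hloc x).toFinset,
        b x y * ‖(cutoff (G.dist x₀ ·) n x : ℂ) - cutoff (G.dist x₀ ·) n y‖
      ≤ D (2 * n) * P (2 * n) / n := by
  have hP0 : 0 ≤ P (2 * n) := (hbnn x₀ x₀).trans (hP _ x₀ x₀ (by simp))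
  have hD0 : 0 ≤ D (2 * n) := (Nat.cast_nonneg _).trans (hD _ x₀ (by simp))
  have hadj : ∀ y ∈ (hloc x).toFinset, G.Adj x y := fun y hy => (hG x y).2 (by simpa using hy)
  simp_rw [← Complex.ofReal_sub, Complex.norm_real, Real.norm_eq_abs]
  by_cases hx : G.dist x₀ x ≤ 2 * n
  · calc _ ≤ ∑ _y ∈ (hloc x).toFinset, P (2 * n) * (1 / n) :=
          Finset.sum_le_sum fun y hy => mul_le_mul (hP _ x y hx)
            (abs_cutoff_dist_sub_le_of_adj (hadj y hy)) (abs_nonneg _) hP0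
      _ = (hloc x).toFinset.card * (P (2 * n) * (1 / n)) := by
          rw [Finset.sum_const, nsmul_eq_mul]
      _ ≤ D (2 * n) * (P (2 * n) * (1 / n)) := by
          gcongr
          rw [← Set.ncard_eq_toFinset_card _ (hloc x)]
          exact hD _ x hx
      _ = _ := by ring
  · rw [Finset.sum_eq_zero fun y hy => by
      rw [cutoff_dist_eq_of_adj_of_lt (not_le.1 hx) (hadj y hy), sub_self, abs_zero, mul_zero]]
    positivity

end GraphCutoff

noncomputable def magCommutator {V : Type*} (μ : V → ℝ) (b : V → V → ℝ) (θ : V → V → ℝ)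
    (ψ u : V → ℂ) (x : V) : ℂ :=
  (μ x : ℂ)⁻¹ *
    ∑' y, (b x y : ℂ) * ((ψ x - ψ y) * Complex.exp (Complex.I * (θ x y : ℝ)) * u y)

section Commutator

variable {V : Type*} {μ : V → ℝ} {μ₀ C : ℝ} {b : V → V → ℝ} {θ : V → V → ℝ} {ψ u : V → ℂ}

lemma eq_zero_of_notMem_toFinset (hbnn : ∀ x y, 0 ≤ b x y) (hloc : ∀ x, {y | 0 < b x y}.Finite)
    {x y : V} (hy : y ∉ (hloc x).toFinset) : b x y = 0 :=
  le_antisymm (by simpa using hy) (hbnn x y)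

lemma tsum_ofReal_mul_eq_sum (hbnn : ∀ x y, 0 ≤ b x y) (hloc : ∀ x, {y | 0 < b x y}.Finite)
    (x : V) (g : V → ℂ) :
    ∑' y, (b x y : ℂ) * g y = ∑ y ∈ (hloc x).toFinset, (b x y : ℂ) * g y :=
  tsum_eq_sum fun y hy => by
    rw [eq_zero_of_notMem_toFinset hbnn hloc hy, Complex.ofReal_zero, zero_mul]

lemma magLap_mul (hbnn : ∀ x y, 0 ≤ b x y) (hloc : ∀ x, {y | 0 < b x y}.Finite) (x : V) :
    magLap μ b θ (fun z => ψ z * u z) x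
      = ψ x * magLap μ b θ u x + magCommutator μ b θ ψ u x := by
  simp only [magLap, magCommutator]
  rw [tsum_ofReal_mul_eq_sum hbnn hloc x, tsum_ofReal_mul_eq_sum hbnn hloc x,
    tsum_ofReal_mul_eq_sum hbnn hloc x, mul_left_comm, ← mul_add]
  congr 1
  rw [Finset.mul_sum, ← Finset.sum_add_distrib]
  exact Finset.sum_congr rfl fun y _ => by ring

lemma norm_magCommutator_le (hbnn : ∀ x y, 0 ≤ b x y) (hloc : ∀ x, {y | 0 < b x y}.Finite)
    {x : V} (hμx : 0 < μ x) :
    ‖magCommutator μ b θ ψ u x‖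
      ≤ (μ x)⁻¹ * ∑ y ∈ (hloc x).toFinset, b x y * ‖ψ x - ψ y‖ * ‖u y‖ := by
  rw [magCommutator, tsum_ofReal_mul_eq_sum hbnn hloc, norm_mul, norm_inv, Complex.norm_real,
    Real.norm_of_nonneg hμx.le]
  gcongr
  refine (norm_sum_le _ _).trans_eq (Finset.sum_congr rfl fun y _ => ?_)
  rw [norm_mul, norm_mul, norm_mul, Complex.norm_exp_I_mul_ofReal, Complex.norm_real,
    Real.norm_of_nonneg (hbnn x y)]
  ring

lemma mul_norm_magCommutator_sq_le (hμ0 : 0 < μ₀) (hμ : ∀ x, μ₀ ≤ μ x)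
    (hbnn : ∀ x y, 0 ≤ b x y) (hloc : ∀ x, {y | 0 < b x y}.Finite)
    (hrow : ∀ x, ∑ y ∈ (hloc x).toFinset, b x y * ‖ψ x - ψ y‖ ≤ C) (x : V) :
    μ x * ‖magCommutator μ b θ ψ u x‖ ^ 2
      ≤ C / μ₀ ^ 2 * ∑ y ∈ (hloc x).toFinset, b x y * ‖ψ x - ψ y‖ * (μ y * ‖u y‖ ^ 2) := by
  set N := (hloc x).toFinset
  set w : V → ℝ := fun y => b x y * ‖ψ x - ψ y‖
  have hw : ∀ y, 0 ≤ w y := fun y => mul_nonneg (hbnn x y) (norm_nonneg _)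
  have hμx : 0 < μ x := hμ0.trans_le (hμ x)
  have hC : 0 ≤ C := (Finset.sum_nonneg fun y _ => hw y).trans (hrow x)
  have hcs : (∑ y ∈ N, w y * ‖u y‖) ^ 2 ≤ (∑ y ∈ N, w y) * ∑ y ∈ N, w y * ‖u y‖ ^ 2 :=
    Finset.sum_sq_le_sum_mul_sum_of_sq_le_mul N (fun y _ => hw y)
      (fun y _ => mul_nonneg (hw y) (sq_nonneg _)) fun y _ => le_of_eq (by ring)
  have hweight : ∑ y ∈ N, w y * ‖u y‖ ^ 2 ≤ μ₀⁻¹ * ∑ y ∈ N, w y * (μ y * ‖u y‖ ^ 2) := by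
    rw [Finset.mul_sum]
    refine Finset.sum_le_sum fun y _ => ?_
    rw [mul_left_comm]
    refine mul_le_mul_of_nonneg_left ?_ (hw y)
    rw [le_inv_mul_iff₀ hμ0]
    exact mul_le_mul_of_nonneg_right (hμ y) (sq_nonneg _)
  calc μ x * ‖magCommutator μ b θ ψ u x‖ ^ 2
      ≤ μ x * ((μ x)⁻¹ * ∑ y ∈ N, w y * ‖u y‖) ^ 2 := by
        gcongr
        exact norm_magCommutator_le hbnn hloc hμx
    _ = (μ x)⁻¹ * (∑ y ∈ N, w y * ‖u y‖) ^ 2 := by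
        field_simp
    _ ≤ μ₀⁻¹ * (C * (μ₀⁻¹ * ∑ y ∈ N, w y * (μ y * ‖u y‖ ^ 2))) := by
        gcongr
        · exact hμ x
        · exact hcs.trans (mul_le_mul (hrow x) hweight
            (Finset.sum_nonneg fun y _ => mul_nonneg (hw y) (sq_nonneg _)) hC)
    _ = C / μ₀ ^ 2 * ∑ y ∈ N, w y * (μ y * ‖u y‖ ^ 2) := by ring

lemma summable_and_wnormSq_magCommutator_le (hμ0 : 0 < μ₀) (hμ : ∀ x, μ₀ ≤ μ x)
    (hbsymm : ∀ x y, b x y = b y x) (hbnn : ∀ x y, 0 ≤ b x y)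
    (hloc : ∀ x, {y | 0 < b x y}.Finite) (hC : 0 ≤ C)
    (hrow : ∀ x, ∑ y ∈ (hloc x).toFinset, b x y * ‖ψ x - ψ y‖ ≤ C)
    (hu : Summable fun x => μ x * ‖u x‖ ^ 2) :
    Summable (fun x => μ x * ‖magCommutator μ b θ ψ u x‖ ^ 2) ∧
      wnormSq μ (magCommutator μ b θ ψ u) ≤ (C / μ₀) ^ 2 * wnormSq μ u := by
  have hμ' : ∀ x, 0 ≤ μ x := fun x => (hμ0.trans_le (hμ x)).le
  have hw0 : ∀ x y, 0 ≤ b x y * ‖ψ x - ψ y‖ := fun x y => mul_nonneg (hbnn x y) (norm_nonneg _)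
  set w : V → V → ℝ≥0∞ := fun x y => ENNReal.ofReal (b x y * ‖ψ x - ψ y‖)
  have hw : ∀ x y, w x y = w y x := fun x y => by simp only [w, hbsymm x y, norm_sub_rev]
  have hsum : ∀ x (a : V → ℝ), (∀ y, 0 ≤ a y) →
      ENNReal.ofReal (∑ y ∈ (hloc x).toFinset, b x y * ‖ψ x - ψ y‖ * a y)
        = ∑' y, w x y * ENNReal.ofReal (a y) := fun x a ha => by
    rw [ENNReal.ofReal_sum_eq_tsum_of_notMem (fun y => mul_nonneg (hw0 x y) (ha y))
      fun y hy => by rw [eq_zero_of_notMem_toFinset hbnn hloc hy, zero_mul, zero_mul]]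
    exact tsum_congr fun y => ENNReal.ofReal_mul (hw0 x y)
  have hrow' : ∀ x, ∑' y, w x y ≤ ENNReal.ofReal C := fun x =>
    (ENNReal.ofReal_sum_eq_tsum_of_notMem (hw0 x) fun y hy => by
      rw [eq_zero_of_notMem_toFinset hbnn hloc hy, zero_mul]).symm.trans_le
      (ENNReal.ofReal_le_ofReal (hrow x))
  refine summable_and_tsum_le_of_tsum_ofReal_le (fun x => mul_nonneg (hμ' x) (sq_nonneg _))
    (mul_nonneg (sq_nonneg _) (wnormSq_nonneg hμ' u)) ?_
  calc ∑' x, ENNReal.ofReal (μ x * ‖magCommutator μ b θ ψ u x‖ ^ 2)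
      ≤ ∑' x, ENNReal.ofReal (C / μ₀ ^ 2) * ∑' y, w x y * ENNReal.ofReal (μ y * ‖u y‖ ^ 2) :=
        ENNReal.tsum_le_tsum fun x => by
          rw [← hsum x _ fun y => mul_nonneg (hμ' y) (sq_nonneg _), ← ENNReal.ofReal_mul
            (by positivity)]
          exact ENNReal.ofReal_le_ofReal (mul_norm_magCommutator_sq_le hμ0 hμ hbnn hloc hrow x)
    _ ≤ ENNReal.ofReal (C / μ₀ ^ 2) *
          (ENNReal.ofReal C * ∑' y, ENNReal.ofReal (μ y * ‖u y‖ ^ 2)) := by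
        rw [ENNReal.tsum_mul_left]
        gcongr
        exact ENNReal.tsum_tsum_mul_le_of_symm hw hrow' _
    _ = ENNReal.ofReal ((C / μ₀) ^ 2 * wnormSq μ u) := by
        rw [wnormSq,
          ← ENNReal.ofReal_tsum_of_nonneg (fun y => mul_nonneg (hμ' y) (sq_nonneg _)) hu,
          ← ENNReal.ofReal_mul hC, ← ENNReal.ofReal_mul (by positivity)]
        congr 1
        ring

end Commutator

section
variable {V : Type*} [Countable V] (μ : V → ℝ) (μ₀ : ℝ) (b : V → V → ℝ) (θ : V → V → ℝ)
  (G : SimpleGraph V) (x₀ : V) (D P : ℕ → ℝ)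

theorem localization_estimate
    (hμ0 : 0 < μ₀) (hμ : ∀ x, μ₀ ≤ μ x)
    (hbsymm : ∀ x y, b x y = b y x) (hbnn : ∀ x y, 0 ≤ b x y)
    (hloc : ∀ x, {y | 0 < b x y}.Finite)
    (hG : ∀ x y, G.Adj x y ↔ 0 < b x y)
    (hD : ∀ (m : ℕ) (x : V), G.dist x₀ x ≤ m → ({y | 0 < b x y}.ncard : ℝ) ≤ D m)
    (hP : ∀ (m : ℕ) (x y : V), G.dist x₀ x ≤ m → b x y ≤ P m)
    (n : ℕ) (ε : ℝ) (hε0 : 0 < ε) (hε1 : ε < 1)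
    (u : V → ℂ) (hu : Summable fun x => μ x * ‖u x‖ ^ 2)
    (hΔu : Summable fun x => μ x * ‖magLap μ b θ u x‖ ^ 2) :
    wnormSq μ (fun x => (cutoff (fun z => G.dist x₀ z) n x : ℂ) * magLap μ b θ u x)
      ≤ (1 - ε)⁻¹ *
          wnormSq μ (magLap μ b θ (fun x => (cutoff (fun z => G.dist x₀ z) n x : ℂ) * u x))
        + ((9 + 4 * ε) / ((1 - ε) * ε)) * (D (2 * n) * P (2 * n) / (μ₀ * n)) ^ 2
            * wnormSq μ u := by
  set χ : V → ℂ := fun x => (cutoff (fun z => G.dist x₀ z) n x : ℂ)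
  set C := D (2 * n) * P (2 * n) / n
  have hμ' : ∀ x, 0 ≤ μ x := fun x => (hμ0.trans_le (hμ x)).le
  have hrow := sum_mul_norm_cutoff_dist_sub_le (n := n) hbnn hloc hG hD hP
  have hC : 0 ≤ C :=
    (Finset.sum_nonneg fun y _ => mul_nonneg (hbnn x₀ y) (norm_nonneg _)).trans (hrow x₀)
  obtain ⟨hKu, hKu_le⟩ :=
    summable_and_wnormSq_magCommutator_le (θ := θ) hμ0 hμ hbsymm hbnn hloc hC hrow hu
  have hχΔu : Summable fun x => μ x * ‖χ x * magLap μ b θ u x‖ ^ 2 :=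
    summable_mul_norm_mul_sq_of_norm_le_one hμ' (fun x => norm_cutoff_le_one x) hΔu
  have hsplit : magLap μ b θ (fun x => χ x * u x)
      = (fun x => χ x * magLap μ b θ u x) + magCommutator μ b θ χ u :=
    funext (magLap_mul hbnn hloc)
  have hε : ε⁻¹ ≤ (9 + 4 * ε) / ((1 - ε) * ε) := by
    rw [inv_eq_one_div, div_le_div_iff₀ hε0 (mul_pos (sub_pos.2 hε1) hε0)]
    nlinarith
  rw [hsplit]
  refine (wnormSq_le_of_add hμ' hε0 hε1 hχΔu hKu).trans (add_le_add le_rfl ?_)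
  calc ε⁻¹ * wnormSq μ (magCommutator μ b θ χ u) ≤ ε⁻¹ * ((C / μ₀) ^ 2 * wnormSq μ u) :=
        mul_le_mul_of_nonneg_left hKu_le (inv_nonneg.2 hε0.le)
    _ ≤ (9 + 4 * ε) / ((1 - ε) * ε) * ((C / μ₀) ^ 2 * wnormSq μ u) := by
        gcongr
        exact mul_nonneg (sq_nonneg _) (wnormSq_nonneg hμ' u)
    _ = _ := by ring

end
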